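/- arXiv:math/0610327 — 4 statements merged into one kernel-verified Lean document; each statement's English description precedes it below -/
import Mathlib

section
/- Let A_1, …, A_n be a solution of the Schlesinger equations S_(n,m) on a nonempty connected open set U. Then for each k ∈ {1, …, n} the characteristic polynomial of A_k(u) is independent of u ∈ U; in particular the eigenvalues (the characteristic exponents λ_1^{(k)}, …, λ_m^{(k)} of the associated Fuchsian system at the pole u_k) do not depend on u_1, …, u_n. -/
/- STATEMENT 1: For a solution of the Schlesinger equations S_(n,m) on a nonempty
connected open set U, the characteristic polynomial of each A_k(u) is independent of
u ∈ U; in particular the characteristic exponents at each pole are constant. -/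

attribute [local instance] Matrix.normedAddCommGroup Matrix.normedSpace

/-- Partial derivative in the direction of the `j`-th coordinate. -/
noncomputable def pd {n m : ℕ} (F : (Fin n → ℂ) → Matrix (Fin m) (Fin m) ℂ) (j : Fin n)
    (u : Fin n → ℂ) : Matrix (Fin m) (Fin m) ℂ :=
  fderiv ℂ F u (Pi.single j 1)

/-- The Schlesinger equations S_(n,m) on `U`. -/
def IsSchlesingerSol {n m : ℕ} (U : Set (Fin n → ℂ))
    (A : Fin n → (Fin n → ℂ) → Matrix (Fin m) (Fin m) ℂ) : Prop :=
  (∀ i j, i ≠ j → ∀ u ∈ U,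
    pd (A i) j u = (u i - u j)⁻¹ • (A i u * A j u - A j u * A i u)) ∧
  (∀ i, ∀ u ∈ U,
    pd (A i) i u
      = -∑ j ∈ Finset.univ.erase i, (u i - u j)⁻¹ • (A i u * A j u - A j u * A i u))

open Matrix

/-- Determinant as a continuous multilinear map in the rows. -/
noncomputable def detCMM (m : ℕ) :
    ContinuousMultilinearMap ℂ (fun _ : Fin m => (Fin m → ℂ)) ℂ :=
  MultilinearMap.mkContinuous
    (Matrix.detRowAlternating (n := Fin m) (R := ℂ)).toMultilinearMap
    (Nat.factorial m) (by
      intro v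
      have h1 : (Matrix.detRowAlternating (n := Fin m) (R := ℂ)).toMultilinearMap v
          = Matrix.det (Matrix.of v) := rfl
      rw [h1, Matrix.det_apply]
      calc ‖∑ σ : Equiv.Perm (Fin m), Equiv.Perm.sign σ • ∏ i, Matrix.of v (σ i) i‖
          ≤ ∑ σ : Equiv.Perm (Fin m), ‖Equiv.Perm.sign σ • ∏ i, Matrix.of v (σ i) i‖ :=
            norm_sum_le _ _
        _ ≤ ∑ _σ : Equiv.Perm (Fin m), ∏ i, ‖v i‖ := by
            refine Finset.sum_le_sum fun σ _ => ?_
            have hs : ‖Equiv.Perm.sign σ • ∏ i, Matrix.of v (σ i) i‖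
                = ‖∏ i, Matrix.of v (σ i) i‖ := by
              rcases Int.units_eq_one_or (Equiv.Perm.sign σ) with h | h <;> simp [h]
            rw [hs, norm_prod]
            calc ∏ i, ‖Matrix.of v (σ i) i‖ ≤ ∏ i, ‖v (σ i)‖ := by
                  refine Finset.prod_le_prod (fun i _ => norm_nonneg _) fun i _ => ?_
                  exact norm_le_pi_norm (v (σ i)) i
              _ = ∏ i, ‖v i‖ := Equiv.prod_comp σ fun i => ‖v i‖
        _ = (Nat.factorial m : ℝ) * ∏ i, ‖v i‖ := by
            rw [Finset.sum_const, Finset.card_univ, Fintype.card_perm, nsmul_eq_mul]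
            simp)

lemma detCMM_apply {m : ℕ} (M : Matrix (Fin m) (Fin m) ℂ) : detCMM m M = M.det := rfl

lemma det_updateRow_eq {m : ℕ} (C : Matrix (Fin m) (Fin m) ℂ) (i : Fin m) (w : Fin m → ℂ) :
    (C.updateRow i w).det = ∑ j, adjugate C j i * w j := by
  have h1 : (C.updateRow i w).det = Matrix.cramer Cᵀ w i := by
    rw [Matrix.cramer_apply, Matrix.updateCol_transpose, Matrix.det_transpose]
  rw [h1, Matrix.cramer_eq_adjugate_mulVec, Matrix.mulVec, dotProduct]
  congr 1
  ext j
  rw [← Matrix.adjugate_transpose, Matrix.transpose_apply]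

lemma sum_det_updateRow_eq_trace {m : ℕ} (C H : Matrix (Fin m) (Fin m) ℂ) :
    ∑ i, (C.updateRow i (H i)).det = Matrix.trace (adjugate C * H) := by
  rw [Matrix.trace]
  simp only [det_updateRow_eq, Matrix.diag_apply, Matrix.mul_apply]
  rw [Finset.sum_comm]

lemma trace_adjugate_commutator {m : ℕ} (x : ℂ) (M B : Matrix (Fin m) (Fin m) ℂ) :
    Matrix.trace (adjugate (x • (1 : Matrix (Fin m) (Fin m) ℂ) - M) * (M * B - B * M)) = 0 := by
  set C : Matrix (Fin m) (Fin m) ℂ := x • 1 - M with hC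
  have hcomm : M * adjugate C = adjugate C * M := by
    have h1 : C * adjugate C = adjugate C * C := by
      rw [Matrix.mul_adjugate, Matrix.adjugate_mul]
    have hM : M = x • (1 : Matrix (Fin m) (Fin m) ℂ) - C := by rw [hC]; abel
    rw [hM, Matrix.sub_mul, Matrix.mul_sub]
    rw [Matrix.smul_mul, Matrix.mul_smul, Matrix.one_mul, Matrix.mul_one, h1]
  rw [Matrix.mul_sub, Matrix.trace_sub, ← Matrix.mul_assoc, ← hcomm, Matrix.mul_assoc,
    Matrix.trace_mul_comm M (adjugate C * B), Matrix.mul_assoc, sub_self]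

lemma trace_adjugate_commutator' {m : ℕ} (x c : ℂ) (M B : Matrix (Fin m) (Fin m) ℂ) :
    Matrix.trace (adjugate (x • (1 : Matrix (Fin m) (Fin m) ℂ) - M)
      * (c • (M * B - B * M))) = 0 := by
  have h : c • (M * B - B * M) = M * (c • B) - (c • B) * M := by
    rw [smul_sub, mul_smul_comm, smul_mul_assoc]
  rw [h]; exact trace_adjugate_commutator x M (c • B)

lemma eval_charpoly' {m : ℕ} (M : Matrix (Fin m) (Fin m) ℂ) (x : ℂ) :
    (Matrix.charpoly M).eval x = (x • (1 : Matrix (Fin m) (Fin m) ℂ) - M).det := by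
  rw [Matrix.charpoly, eval_det, Matrix.matPolyEquiv_charmatrix]
  rw [Polynomial.eval_sub, Polynomial.eval_X, Polynomial.eval_C]
  congr 1
  ext i j
  simp [Matrix.scalar_apply, Matrix.smul_apply, Matrix.one_apply, Matrix.diagonal_apply]

/-- Constancy on a connected open set from a vanishing derivative. -/
lemma const_of_fderiv_zero {E : Type*} [NormedAddCommGroup E] [NormedSpace ℂ E]
    {U : Set E} (hU : IsOpen U) (hUconn : IsConnected U) {f : E → ℂ}
    (hf : ∀ u ∈ U, HasFDerivAt f (0 : E →L[ℂ] ℂ) u) :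
    ∀ u ∈ U, ∀ v ∈ U, f u = f v := by
  haveI : PreconnectedSpace U := Subtype.preconnectedSpace hUconn.isPreconnected
  have hg : IsLocallyConstant (fun p : U => f p.1) := by
    rw [IsLocallyConstant.iff_exists_open]
    rintro ⟨p, hp⟩
    obtain ⟨ε, hε, hball⟩ := Metric.isOpen_iff.1 hU p hp
    refine ⟨Subtype.val ⁻¹' Metric.ball p ε,
      Metric.isOpen_ball.preimage continuous_subtype_val,
      Set.mem_preimage.mpr (Metric.mem_ball_self hε), ?_⟩
    rintro ⟨q, hq⟩ hqball
    have hconv : Convex ℝ (Metric.ball p ε) := convex_ball p ε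
    have hdiff : DifferentiableOn ℂ f (Metric.ball p ε) := fun z hz =>
      ((hf z (hball hz)).differentiableAt).differentiableWithinAt
    have h0 : ∀ z ∈ Metric.ball p ε, fderivWithin ℂ f (Metric.ball p ε) z = 0 := fun z hz => by
      rw [fderivWithin_of_isOpen Metric.isOpen_ball hz]
      exact (hf z (hball hz)).fderiv
    exact hconv.is_const_of_fderivWithin_eq_zero hdiff h0
      (Set.mem_preimage.mp hqball) (Metric.mem_ball_self hε)
  intro u hu v hv
  exact hg.apply_eq_of_isPreconnected isPreconnected_univ
    (x := ⟨u, hu⟩) (y := ⟨v, hv⟩) (Set.mem_univ _) (Set.mem_univ _)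

theorem schlesinger_charpoly_constant {n m : ℕ} (hn : 2 ≤ n) (hm : 1 ≤ m)
    (U : Set (Fin n → ℂ)) (hU : IsOpen U) (hUconn : IsConnected U)
    (hdist : ∀ u ∈ U, ∀ i j : Fin n, i ≠ j → u i ≠ u j)
    (A : Fin n → (Fin n → ℂ) → Matrix (Fin m) (Fin m) ℂ)
    (hA : ∀ i, DifferentiableOn ℂ (A i) U)
    (hS : IsSchlesingerSol U A) :
    ∀ (k : Fin n), ∀ u ∈ U, ∀ v ∈ U,
      Matrix.charpoly (A k u) = Matrix.charpoly (A k v) := by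
  intro k u hu v hv
  apply Polynomial.funext
  intro x
  rw [eval_charpoly', eval_charpoly']
  -- key: the function u ↦ det (x • 1 - A k u) has vanishing derivative on U
  have key : ∀ w ∈ U, HasFDerivAt
      (fun w => (x • (1 : Matrix (Fin m) (Fin m) ℂ) - A k w).det)
      (0 : (Fin n → ℂ) →L[ℂ] ℂ) w := by
    intro w hw
    have hdiffAt : DifferentiableAt ℂ (A k) w := (hA k).differentiableAt (hU.mem_nhds hw)
    have hF : HasFDerivAt (fun z => x • (1 : Matrix (Fin m) (Fin m) ℂ) - A k z)
        (-(fderiv ℂ (A k) w)) w :=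
      hdiffAt.hasFDerivAt.const_sub _
    set Cw : Matrix (Fin m) (Fin m) ℂ := x • 1 - A k w with hCw
    have hdet : HasFDerivAt
        (fun z => detCMM m (x • (1 : Matrix (Fin m) (Fin m) ℂ) - A k z))
        (((detCMM m).linearDeriv Cw).comp (-(fderiv ℂ (A k) w))) w :=
      ((detCMM m).hasFDerivAt (x := Cw)).comp w hF
    -- traces against all partial derivatives vanish
    have htr : ∀ j : Fin n, Matrix.trace (adjugate Cw * pd (A k) j w) = 0 := by
      intro j
      by_cases hjk : j = k
      · subst hjk
        rw [hS.2 j w hw]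
        rw [Matrix.mul_neg, Matrix.trace_neg, Matrix.mul_sum, Matrix.trace_sum]
        rw [Finset.sum_eq_zero, neg_zero]
        intro i _
        exact trace_adjugate_commutator' x _ (A j w) (A i w)
      · rw [hS.1 k j (fun h => hjk h.symm) w hw]
        exact trace_adjugate_commutator' x _ (A k w) (A j w)
    -- the derivative is zero
    have hzero : (((detCMM m).linearDeriv Cw).comp (-(fderiv ℂ (A k) w)))
        = (0 : (Fin n → ℂ) →L[ℂ] ℂ) := by
      ext h
      simp only [ContinuousLinearMap.comp_apply, ContinuousLinearMap.neg_apply,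
        ContinuousLinearMap.zero_apply]
      have hld : ∀ H : Matrix (Fin m) (Fin m) ℂ,
          (detCMM m).linearDeriv Cw H = Matrix.trace (adjugate Cw * H) := by
        intro H
        refine (ContinuousMultilinearMap.linearDeriv_apply _ _ _).trans ?_
        exact sum_det_updateRow_eq_trace Cw H
      show (detCMM m).linearDeriv Cw ((-fderiv ℂ (A k) w) h) = 0
      refine (hld _).trans ?_
      have hh : fderiv ℂ (A k) w h = ∑ j, h j • pd (A k) j w := by
        have hdecomp : h = ∑ j, h j • (Pi.single j 1 : Fin n → ℂ) := by
          ext t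
          simp [Pi.single_apply]
        conv_lhs => rw [hdecomp]
        rw [map_sum]
        exact Finset.sum_congr rfl fun j _ => (fderiv ℂ (A k) w).map_smul _ _
      have hval : (-fderiv ℂ (A k) w) h = -(∑ j : Fin n, h j • pd (A k) j w) := by
        rw [ContinuousLinearMap.neg_apply, hh]
      have final : (Cw.adjugate * (-(∑ j : Fin n, h j • pd (A k) j w))).trace = 0 := by
        rw [Matrix.mul_neg, Matrix.trace_neg, Matrix.mul_sum, Matrix.trace_sum,
          Finset.sum_eq_zero, neg_zero]
        intro j _
        rw [Matrix.mul_smul, Matrix.trace_smul, htr j, smul_zero]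
      exact (congrArg (fun M => (Cw.adjugate * M).trace) hval).trans final
    rw [hzero] at hdet
    exact hdet
  exact const_of_fderiv_zero hU hUconn key u hu v hv
end

section
/- Let A_1, …, A_n be a solution of the Schlesinger equations S_(n,m) on a nonempty connected open set U, and set A_∞ := −(A_1 + ⋯ + A_n) (a constant matrix) and B_1(u) := −Σ_{k=1}^n u_k A_k(u). Then for every index j, ∂B_1/∂u_j = −A_j + [A_∞, A_j] on U. In particular, if A_∞ = diag(λ_1, …, λ_m) is diagonal, then for every pair of indices (a,b) with λ_a − λ_b = 1 the entry (B_1)_{ab}(u) is constant on U (this is the constancy in u of the matrix R_1^{(∞)} entering the Levelt data at infinity). -/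
/- STATEMENT 12: For a Schlesinger solution, B_1(u) := −Σ_k u_k A_k(u) satisfies
∂B_1/∂u_j = −A_j + [A_∞, A_j] with A_∞ = −(A_1 + ⋯ + A_n); in particular, if
A_∞ = diag(λ) is diagonal, then (B_1)_{ab} is constant on U whenever λ_a − λ_b = 1
(constancy of the Levelt datum R_1^{(∞)} at infinity). -/

attribute [local instance] Matrix.normedAddCommGroup Matrix.normedSpace

/-- `B_1(u) = −Σ_k u_k A_k(u)`. -/
noncomputable def Bone {n m : ℕ} (A : Fin n → (Fin n → ℂ) → Matrix (Fin m) (Fin m) ℂ)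
    (u : Fin n → ℂ) : Matrix (Fin m) (Fin m) ℂ :=
  -∑ k, u k • A k u

/-- If a function has zero derivative at every point of an open preconnected set,
it is constant on that set. -/
theorem const_of_hasFDerivAt_zero' {E F : Type*} [NormedAddCommGroup E] [NormedSpace ℂ E]
    [NormedAddCommGroup F] [NormedSpace ℂ F] {U : Set E} (hU : IsOpen U)
    (hconn : IsPreconnected U) {φ : E → F}
    (hφ : ∀ x ∈ U, HasFDerivAt φ (0 : E →L[ℂ] F) x) :
    ∀ x ∈ U, ∀ y ∈ U, φ x = φ y := by
  intro x hx y hy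
  haveI : PreconnectedSpace U := Subtype.preconnectedSpace hconn
  set S : Set U := {p | φ p = φ x} with hSdef
  have hSopen : IsOpen S := by
    rw [isOpen_iff_mem_nhds]
    rintro ⟨p, hpU⟩ hp
    obtain ⟨ε, hε, hball⟩ := Metric.isOpen_iff.1 hU p hpU
    have hconst : ∀ q ∈ Metric.ball p ε, φ q = φ p := by
      intro q hq
      refine (convex_ball p ε).is_const_of_fderivWithin_eq_zero (𝕜 := ℂ)
        (fun z hz => ((hφ z (hball hz)).differentiableAt).differentiableWithinAt)
        (fun z hz => ?_) hq (Metric.mem_ball_self hε)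
      rw [fderivWithin_of_isOpen Metric.isOpen_ball hz, (hφ z (hball hz)).fderiv]
    have hsub : Subtype.val ⁻¹' (Metric.ball p ε) ⊆ S := by
      rintro ⟨q, hqU⟩ hq
      simp only [Set.mem_preimage] at hq
      show φ q = φ x
      rw [hconst q hq]
      exact hp
    refine Filter.mem_of_superset (IsOpen.mem_nhds
      (Metric.isOpen_ball.preimage continuous_subtype_val) ?_) hsub
    exact Metric.mem_ball_self hε
  have hSclosed : IsClosed S := by
    have hcont : Continuous (fun p : U => φ p) := by
      apply ContinuousOn.restrict
      exact fun z hz => ((hφ z hz).differentiableAt.continuousAt).continuousWithinAt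
    exact isClosed_eq hcont continuous_const
  have huniv : S = Set.univ := IsClopen.eq_univ ⟨hSclosed, hSopen⟩ ⟨⟨x, hx⟩, rfl⟩
  have hy' : (⟨y, hy⟩ : U) ∈ S := huniv ▸ Set.mem_univ _
  exact hy'.symm

theorem schlesinger_Bone_derivative {n m : ℕ} (hn : 2 ≤ n) (hm : 1 ≤ m)
    (U : Set (Fin n → ℂ)) (hU : IsOpen U) (hUconn : IsConnected U)
    (hdist : ∀ u ∈ U, ∀ i j : Fin n, i ≠ j → u i ≠ u j)
    (A : Fin n → (Fin n → ℂ) → Matrix (Fin m) (Fin m) ℂ)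
    (hA : ∀ i, DifferentiableOn ℂ (A i) U)
    (hS : IsSchlesingerSol U A) :
    (∀ j : Fin n, ∀ u ∈ U,
      pd (Bone A) j u
        = -A j u + ((-∑ k, A k u) * A j u - A j u * (-∑ k, A k u))) ∧
    (∀ lam : Fin m → ℂ, (∀ u ∈ U, (-∑ k, A k u) = Matrix.diagonal lam) →
      ∀ a b : Fin m, lam a - lam b = 1 →
        ∀ u ∈ U, ∀ v ∈ U, Bone A u a b = Bone A v a b) := by
  obtain ⟨hS1, hS2⟩ := hS
  -- Step 1: explicit total derivative of Bone
  have hB : ∀ u ∈ U, HasFDerivAt (Bone A)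
      (-(∑ k : Fin n, (u k • fderiv ℂ (A k) u
        + (ContinuousLinearMap.proj k : ((Fin n → ℂ) →L[ℂ] ℂ)).smulRight (A k u)))) u := by
    intro u hu
    have h : HasFDerivAt (fun v : Fin n → ℂ => ∑ k, v k • A k v)
        (∑ k : Fin n, (u k • fderiv ℂ (A k) u
          + (ContinuousLinearMap.proj k : ((Fin n → ℂ) →L[ℂ] ℂ)).smulRight (A k u))) u := by
      apply HasFDerivAt.fun_sum
      intro k _
      exact (hasFDerivAt_apply k u).smul ((hA k).differentiableAt (hU.mem_nhds hu)).hasFDerivAt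
    exact h.neg
  -- Step 2: partial derivatives of Bone
  have hpdB : ∀ j : Fin n, ∀ u ∈ U,
      pd (Bone A) j u = -(A j u + ∑ k, u k • pd (A k) j u) := by
    intro j u hu
    have h := (hB u hu).fderiv
    show fderiv ℂ (Bone A) u (Pi.single j 1) = _
    rw [h]
    simp only [ContinuousLinearMap.neg_apply, ContinuousLinearMap.sum_apply,
      ContinuousLinearMap.add_apply, ContinuousLinearMap.smul_apply,
      ContinuousLinearMap.smulRight_apply, ContinuousLinearMap.proj_apply]
    rw [Finset.sum_add_distrib]
    have hsingle : ∑ k : Fin n, (Pi.single j 1 : Fin n → ℂ) k • A k u = A j u := by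
      rw [Finset.sum_eq_single j]
      · simp
      · intro k _ hkj
        rw [Pi.single_eq_of_ne hkj, zero_smul]
      · simp
    rw [hsingle, add_comm]
    rfl
  -- Step 3: the key Schlesinger computation
  have hsum : ∀ j : Fin n, ∀ u ∈ U,
      ∑ k, u k • pd (A k) j u
        = ∑ k ∈ Finset.univ.erase j, (A k u * A j u - A j u * A k u) := by
    intro j u hu
    rw [← Finset.add_sum_erase _ _ (Finset.mem_univ j), hS2 j u hu, smul_neg, Finset.smul_sum,
      neg_add_eq_sub, ← Finset.sum_sub_distrib]
    refine Finset.sum_congr rfl fun k hk => ?_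
    have hkj : k ≠ j := Finset.ne_of_mem_erase hk
    have hne : u k - u j ≠ 0 := sub_ne_zero.2 (hdist u hu k j hkj)
    have hne2 : u j - u k ≠ 0 := sub_ne_zero.2 (hdist u hu j k hkj.symm)
    rw [hS1 k j hkj u hu, smul_smul, smul_smul,
      show A j u * A k u - A k u * A j u = -(A k u * A j u - A j u * A k u) by rw [neg_sub],
      smul_neg, sub_neg_eq_add, ← add_smul,
      show u k * (u k - u j)⁻¹ + u j * (u j - u k)⁻¹ = 1 by field_simp; ring, one_smul]
  -- Part 1
  have part1 : ∀ j : Fin n, ∀ u ∈ U,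
      pd (Bone A) j u
        = -A j u + ((-∑ k, A k u) * A j u - A j u * (-∑ k, A k u)) := by
    intro j u hu
    rw [hpdB j u hu, hsum j u hu]
    have herase : ∑ k ∈ Finset.univ.erase j, (A k u * A j u - A j u * A k u)
        = ∑ k : Fin n, (A k u * A j u - A j u * A k u) :=
      Finset.sum_erase Finset.univ (by simp)
    rw [herase]
    simp only [neg_add, Finset.sum_sub_distrib, Finset.sum_mul, Finset.mul_sum,
      neg_mul, mul_neg, neg_sub]
    abel
  refine ⟨part1, ?_⟩
  -- Part 2
  intro lam hdiag a b hab
  -- the entry continuous linear map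
  let eL : Matrix (Fin m) (Fin m) ℂ →ₗ[ℂ] ℂ :=
    (LinearMap.proj b).comp (LinearMap.proj (R := ℂ) (φ := fun _ : Fin m => Fin m → ℂ) a)
  let e : Matrix (Fin m) (Fin m) ℂ →L[ℂ] ℂ := LinearMap.toContinuousLinearMap eL
  have h0 : ∀ u ∈ U, HasFDerivAt (fun u => Bone A u a b) (0 : (Fin n → ℂ) →L[ℂ] ℂ) u := by
    intro u hu
    have h1 := e.hasFDerivAt.comp u (hB u hu)
    have hzero : e.comp (-(∑ k : Fin n, (u k • fderiv ℂ (A k) u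
        + (ContinuousLinearMap.proj k : ((Fin n → ℂ) →L[ℂ] ℂ)).smulRight (A k u)))) = 0 := by
      apply ContinuousLinearMap.ext
      intro v
      have hv : v = ∑ j : Fin n, v j • (Pi.single j 1 : Fin n → ℂ) := by
        funext i
        simp [Finset.sum_apply, Pi.single_apply]
      rw [ContinuousLinearMap.comp_apply, ContinuousLinearMap.zero_apply]
      conv_lhs => rw [hv]
      rw [map_sum]
      simp only [map_smul]
      rw [map_sum]
      simp only [map_smul]
      have hterm : ∀ j : Fin n,
          e ((-(∑ k : Fin n, (u k • fderiv ℂ (A k) u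
            + (ContinuousLinearMap.proj k : ((Fin n → ℂ) →L[ℂ] ℂ)).smulRight (A k u))))
            (Pi.single j 1)) = 0 := by
        intro j
        have hLj : (-(∑ k : Fin n, (u k • fderiv ℂ (A k) u
            + (ContinuousLinearMap.proj k : ((Fin n → ℂ) →L[ℂ] ℂ)).smulRight (A k u))))
            (Pi.single j 1) = pd (Bone A) j u := by
          rw [pd, (hB u hu).fderiv]
        rw [hLj]
        show (pd (Bone A) j u) a b = 0
        rw [part1 j u hu, hdiag u hu]
        simp only [Matrix.add_apply, Matrix.neg_apply, Matrix.sub_apply,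
          Matrix.diagonal_mul, Matrix.mul_diagonal]
        linear_combination (A j u a b) * hab
      simp only [hterm, smul_zero, Finset.sum_const_zero]
    replace h1 := h1.congr_fderiv hzero
    exact h1
  exact fun u hu v hv =>
    const_of_hasFDerivAt_zero' hU hUconn.isPreconnected h0 u hu v hv
end

section
/- For x ∈ (0,1), write s := √x and let A_2(x) := [[ −(3s−1)/(16s), 1/(2(s+1)s) ], [ −(s+1)(3s−1)²/(128s), (3s−1)/(16s) ]] and Ψ_1(x) := [[ (3x − 2√x)/16, −log(√x + 1) ], [ ( (9/2)x² + 2x^{3/2} − 5x + 2√x )/128, (2√x − 3x)/16 ]]. Then dΨ_1/dx = −A_2(x) for all x ∈ (0,1). -/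
/- STATEMENT 14: With A_2(x) as in the isomonodromic example and
Ψ_1(x) = [[(3x − 2√x)/16, −log(√x + 1)],
          [((9/2)x² + 2x^{3/2} − 5x + 2√x)/128, (2√x − 3x)/16]],
one has dΨ_1/dx = −A_2(x) for all x ∈ (0,1). -/

attribute [local instance] Matrix.normedAddCommGroup Matrix.normedSpace

noncomputable def exA2 (x : ℝ) : Matrix (Fin 2) (Fin 2) ℝ :=
  let s := Real.sqrt x
  !![-(3 * s - 1) / (16 * s), 1 / (2 * (s + 1) * s);
     -(s + 1) * (3 * s - 1) ^ 2 / (128 * s), (3 * s - 1) / (16 * s)]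

noncomputable def exPsi1 (x : ℝ) : Matrix (Fin 2) (Fin 2) ℝ :=
  let s := Real.sqrt x
  !![(3 * x - 2 * s) / 16, -Real.log (s + 1);
     ((9 / 2) * x ^ 2 + 2 * x * s - 5 * x + 2 * s) / 128, (2 * s - 3 * x) / 16]

theorem psi1_derivative :
    ∀ x ∈ Set.Ioo (0 : ℝ) 1, HasDerivAt exPsi1 (-exA2 x) x := by
  rintro x ⟨hx0, hx1⟩
  have hs : (0:ℝ) < Real.sqrt x := Real.sqrt_pos.2 hx0
  have hs2 : Real.sqrt x ^ 2 = x := Real.sq_sqrt hx0.le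
  have hds : HasDerivAt Real.sqrt (1 / (2 * Real.sqrt x)) x :=
    Real.hasDerivAt_sqrt (ne_of_gt hx0)
  set s := Real.sqrt x with hsdef
  have hsne : s ≠ 0 := ne_of_gt hs
  have hs1 : s + 1 ≠ 0 := by positivity
  have h00 : HasDerivAt (fun y => (3 * y - 2 * Real.sqrt y) / 16)
      (-(-(3 * s - 1) / (16 * s))) x := by
    have h := (((hasDerivAt_id x).const_mul 3).sub (hds.const_mul 2)).div_const 16
    refine h.congr_deriv ?_
    field_simp
  have h01 : HasDerivAt (fun y => -Real.log (Real.sqrt y + 1))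
      (-(1 / (2 * (s + 1) * s))) x := by
    have h := ((Real.hasDerivAt_log hs1).comp x (hds.add_const 1)).neg
    refine h.congr_deriv ?_
    field_simp
  have h10 : HasDerivAt (fun y => ((9 / 2) * y ^ 2 + 2 * y * Real.sqrt y - 5 * y + 2 * Real.sqrt y) / 128)
      (-(-(s + 1) * (3 * s - 1) ^ 2 / (128 * s))) x := by
    have h := (((((hasDerivAt_pow 2 x).const_mul (9/2 : ℝ)).add
        (((hasDerivAt_id x).const_mul 2).mul hds)).sub
        ((hasDerivAt_id x).const_mul 5)).add (hds.const_mul 2)).div_const 128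
    refine h.congr_deriv ?_
    field_simp
    rw [← hsdef, ← hs2]
    simp only [id]
    ring
  have h11 : HasDerivAt (fun y => (2 * Real.sqrt y - 3 * y) / 16)
      (-((3 * s - 1) / (16 * s))) x := by
    have h := ((hds.const_mul 2).sub ((hasDerivAt_id x).const_mul 3)).div_const 16
    refine h.congr_deriv ?_
    field_simp
    ring
  have key : ∀ i j, HasDerivAt (fun y => exPsi1 y i j) ((-exA2 x) i j) x := by
    intro i j
    fin_cases i <;> fin_cases j <;>
      simp only [exPsi1, exA2, Matrix.neg_apply, Matrix.cons_val', Matrix.cons_val_zero,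
        Matrix.cons_val_one, Matrix.head_cons, Matrix.empty_val', Matrix.cons_val_fin_one,
        Matrix.head_fin_const, Matrix.of_apply, Matrix.cons_val_zero] <;>
      [exact h00; exact h01; exact h10; exact h11]
  exact hasDerivAt_pi.2 fun i => hasDerivAt_pi.2 fun j => key i j
end

section
/- Fix n ≥ 2, g ≥ 1, k ∈ {2, …, n}. Let U ⊆ {u ∈ ℂ^n : u_i ≠ u_j for i ≠ j} be open, and let H_1, …, H_n : U × ℂ^g × ℂ^g → ℂ be holomorphic Hamiltonians satisfying the translation-covariance conditions Σ_{l=1}^n ∂H_l/∂q_i = 0 and Σ_{l=1}^n ∂H_l/∂p_i = 1 identically, for every i = 1, …, g. Let q_i, p_i : U → ℂ be holomorphic and satisfy the canonical equations ∂q_i/∂u_l = ∂H_l/∂p_i (u, q(u), p(u)) and ∂p_i/∂u_l = −∂H_l/∂q_i (u, q(u), p(u)) for all i, l. Define the involution σ(ũ)_l := ũ_1 + ũ_k − ũ_l and the transformed data q̃_i(ũ) := ũ_1 + ũ_k − q_i(σ(ũ)), p̃_i(ũ) := −p_i(σ(ũ)), and H̃_l(ũ, Q, P) := −H_l(σ(ũ),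 ũ_1 + ũ_k − Q, −P) (componentwise in Q). Then on σ(U) the functions q̃, p̃ satisfy the canonical equations ∂q̃_i/∂ũ_l = ∂H̃_l/∂P_i (ũ, q̃(ũ), p̃(ũ)) and ∂p̃_i/∂ũ_l = −∂H̃_l/∂Q_i (ũ, q̃(ũ), p̃(ũ)) for all i, l. (This is the canonical symmetry S_k of the Schlesinger Hamiltonian system: q̃_i = u_1 + u_k − q_i, p̃_i = −p_i, ũ_l = u_1 + u_k − u_l, H̃_l = −H_l.) -/
/- STATEMENT 17: The canonical symmetry S_k of the Schlesinger Hamiltonian system: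
if H_1, …, H_n are translation-covariant Hamiltonians (Σ_l ∂H_l/∂q_i = 0,
Σ_l ∂H_l/∂p_i = 1) and (q,p) solves the canonical equations, then the transformed
data q̃_i(ũ) = ũ_1 + ũ_k − q_i(σ(ũ)), p̃_i(ũ) = −p_i(σ(ũ)), with σ(ũ)_l = ũ_1 + ũ_k − ũ_l
and H̃_l(ũ,Q,P) = −H_l(σ(ũ), ũ_1 + ũ_k − Q, −P), again solve the canonical equations
on σ(U). (Indices are 0-based: u_1 is the coordinate with index 0.) -/

/-- The phase space `(u, q, p)`. -/
abbrev PhSp (n g : ℕ) := (Fin n → ℂ) × (Fin g → ℂ) × (Fin g → ℂ)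

/-- The involution `σ(ũ)_l = ũ_1 + ũ_k − ũ_l` on the deformation parameters. -/
def sigmaT {n : ℕ} [NeZero n] (k : Fin n) (v : Fin n → ℂ) : Fin n → ℂ :=
  fun l => v 0 + v k - v l

/-- The transformed position `q̃_i(ũ) = ũ_1 + ũ_k − q_i(σ(ũ))`. -/
def qTil {n g : ℕ} [NeZero n] (k : Fin n) (q : Fin g → (Fin n → ℂ) → ℂ) (i : Fin g)
    (v : Fin n → ℂ) : ℂ :=
  v 0 + v k - q i (sigmaT k v)

/-- The transformed momentum `p̃_i(ũ) = −p_i(σ(ũ))`. -/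
def pTil {n g : ℕ} [NeZero n] (k : Fin n) (p : Fin g → (Fin n → ℂ) → ℂ) (i : Fin g)
    (v : Fin n → ℂ) : ℂ :=
  -(p i (sigmaT k v))

/-- The transformed Hamiltonian `H̃_l(ũ,Q,P) = −H_l(σ(ũ), ũ_1 + ũ_k − Q, −P)`. -/
def HTil {n g : ℕ} [NeZero n] (k : Fin n) (H : Fin n → PhSp n g → ℂ) (l : Fin n)
    (x : PhSp n g) : ℂ :=
  -(H l (sigmaT k x.1, fun a => x.1 0 + x.1 k - x.2.1 a, fun a => -x.2.2 a))

noncomputable def sigmaCLM (n : ℕ) [NeZero n] (k : Fin n) :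
    (Fin n → ℂ) →L[ℂ] (Fin n → ℂ) :=
  LinearMap.toContinuousLinearMap
    { toFun := fun v l => v 0 + v k - v l
      map_add' := by intro a b; funext l; simp; ring
      map_smul' := by intro c a; funext l; simp [smul_eq_mul]; ring }

noncomputable def phiCLM (n g : ℕ) [NeZero n] (k : Fin n) :
    PhSp n g →L[ℂ] PhSp n g :=
  LinearMap.toContinuousLinearMap
    { toFun := fun x => (fun l => x.1 0 + x.1 k - x.1 l,
        fun a => x.1 0 + x.1 k - x.2.1 a, fun a => -x.2.2 a)
      map_add' := by
        intro a b
        refine Prod.ext ?_ (Prod.ext ?_ ?_) <;> funext m <;> simp <;> ring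
      map_smul' := by
        intro c a
        refine Prod.ext ?_ (Prod.ext ?_ ?_) <;> funext m <;> simp [smul_eq_mul] <;> ring }

noncomputable def aCLM (n : ℕ) [NeZero n] (k : Fin n) : (Fin n → ℂ) →L[ℂ] ℂ :=
  LinearMap.toContinuousLinearMap
    { toFun := fun v => v 0 + v k
      map_add' := by intro a b; simp; ring
      map_smul' := by intro c a; simp [smul_eq_mul]; ring }

theorem canonical_symmetry_Sk {n g : ℕ} [NeZero n] (hn : 2 ≤ n) (hg : 1 ≤ g)
    (k : Fin n) (hk : k ≠ 0)
    (U : Set (Fin n → ℂ)) (hU : IsOpen U)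
    (hdist : ∀ u ∈ U, ∀ i j : Fin n, i ≠ j → u i ≠ u j)
    (H : Fin n → PhSp n g → ℂ)
    (hHhol : ∀ l, DifferentiableOn ℂ (H l) {x : PhSp n g | x.1 ∈ U})
    (hcov0 : ∀ x : PhSp n g, x.1 ∈ U → ∀ i : Fin g,
      ∑ l, fderiv ℂ (H l) x ((0 : Fin n → ℂ), Pi.single i 1, (0 : Fin g → ℂ)) = 0)
    (hcov1 : ∀ x : PhSp n g, x.1 ∈ U → ∀ i : Fin g,
      ∑ l, fderiv ℂ (H l) x ((0 : Fin n → ℂ), (0 : Fin g → ℂ), Pi.single i 1) = 1)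
    (q p : Fin g → (Fin n → ℂ) → ℂ)
    (hqhol : ∀ i, DifferentiableOn ℂ (q i) U)
    (hphol : ∀ i, DifferentiableOn ℂ (p i) U)
    (hq : ∀ (i : Fin g) (l : Fin n), ∀ u ∈ U,
      fderiv ℂ (q i) u (Pi.single l 1)
        = fderiv ℂ (H l) (u, fun a => q a u, fun a => p a u)
            ((0 : Fin n → ℂ), (0 : Fin g → ℂ), Pi.single i 1))
    (hp : ∀ (i : Fin g) (l : Fin n), ∀ u ∈ U,
      fderiv ℂ (p i) u (Pi.single l 1)
        = -fderiv ℂ (H l) (u, fun a => q a u, fun a => p a u)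
            ((0 : Fin n → ℂ), Pi.single i 1, (0 : Fin g → ℂ))) :
    ∀ v : Fin n → ℂ, sigmaT k v ∈ U → ∀ (i : Fin g) (l : Fin n),
      (fderiv ℂ (qTil k q i) v (Pi.single l 1)
        = fderiv ℂ (HTil k H l) (v, fun a => qTil k q a v, fun a => pTil k p a v)
            ((0 : Fin n → ℂ), (0 : Fin g → ℂ), Pi.single i 1)) ∧
      (fderiv ℂ (pTil k p i) v (Pi.single l 1)
        = -fderiv ℂ (HTil k H l) (v, fun a => qTil k q a v, fun a => pTil k p a v)
            ((0 : Fin n → ℂ), Pi.single i 1, (0 : Fin g → ℂ))) := by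
  intro v hv i l
  set u : Fin n → ℂ := sigmaT k v with hu
  set x : PhSp n g := (u, fun a => q a u, fun a => p a u) with hx
  set y : PhSp n g := (v, fun a => qTil k q a v, fun a => pTil k p a v) with hy
  have hxU : x.1 ∈ U := hv
  -- differentiability at the relevant points
  have hqd : DifferentiableAt ℂ (q i) u := (hqhol i).differentiableAt (hU.mem_nhds hv)
  have hpd : DifferentiableAt ℂ (p i) u := (hphol i).differentiableAt (hU.mem_nhds hv)
  have hopen : IsOpen {z : PhSp n g | z.1 ∈ U} := hU.preimage continuous_fst
  have hHd : DifferentiableAt ℂ (H l) x :=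
    (hHhol l).differentiableAt (hopen.mem_nhds hxU)
  set Dq := fderiv ℂ (q i) u with hDq
  set Dp := fderiv ℂ (p i) u with hDp
  set D := fderiv ℂ (H l) x with hD
  -- Φ y = x
  have hΦy : phiCLM n g k y = x := by
    refine Prod.ext ?_ (Prod.ext ?_ ?_)
    · rfl
    · funext a; show v 0 + v k - qTil k q a v = q a u; simp [qTil, hu]
    · funext a; show -pTil k p a v = p a u; simp [pTil, hu]
  -- derivative of HTil at y
  have hHT : HasFDerivAt (HTil k H l) (-(D.comp (phiCLM n g k))) y := by
    have h0 : HasFDerivAt (H l) D (phiCLM n g k y) := by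
      rw [hΦy]; exact hHd.hasFDerivAt
    have h1 : HasFDerivAt (fun z => H l (phiCLM n g k z)) (D.comp (phiCLM n g k)) y :=
      h0.comp y (phiCLM n g k).hasFDerivAt
    exact h1.neg
  have hHTf : fderiv ℂ (HTil k H l) y = -(D.comp (phiCLM n g k)) := hHT.fderiv
  -- the constant direction 𝟙
  have hone : (fun _ : Fin n => (1 : ℂ)) = ∑ m, Pi.single m (1 : ℂ) := by
    funext m; rw [Finset.sum_apply]; simp
  have hDq1 : Dq (fun _ => (1 : ℂ)) = 1 := by
    rw [hone, map_sum]
    calc ∑ m, Dq (Pi.single m 1)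
        = ∑ m, fderiv ℂ (H m) x ((0 : Fin n → ℂ), (0 : Fin g → ℂ), Pi.single i 1) := by
          exact Finset.sum_congr rfl fun m _ => hq i m u hv
      _ = 1 := hcov1 x hxU i
  have hDp1 : Dp (fun _ => (1 : ℂ)) = 0 := by
    rw [hone, map_sum]
    calc ∑ m, Dp (Pi.single m 1)
        = ∑ m, -fderiv ℂ (H m) x ((0 : Fin n → ℂ), Pi.single i 1, (0 : Fin g → ℂ)) := by
          exact Finset.sum_congr rfl fun m _ => hp i m u hv
      _ = -∑ m, fderiv ℂ (H m) x ((0 : Fin n → ℂ), Pi.single i 1, (0 : Fin g → ℂ)) := by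
          rw [Finset.sum_neg_distrib]
      _ = 0 := by rw [hcov0 x hxU i]; ring
  -- σ applied to basis vector
  set c : ℂ := (Pi.single l (1:ℂ) : Fin n → ℂ) 0 + (Pi.single l (1:ℂ) : Fin n → ℂ) k with hc
  have hσe : sigmaCLM n k (Pi.single l 1) = c • (fun _ => (1:ℂ)) - Pi.single l 1 := by
    funext m
    show (Pi.single l (1:ℂ) : Fin n → ℂ) 0 + (Pi.single l (1:ℂ) : Fin n → ℂ) k - (Pi.single l (1:ℂ) : Fin n → ℂ) m = _
    simp [hc]
  -- derivative of qTil
  have hqT : HasFDerivAt (qTil k q i) (aCLM n k - Dq.comp (sigmaCLM n k)) v := by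
    have h1 : HasFDerivAt (fun w => q i (sigmaCLM n k w)) (Dq.comp (sigmaCLM n k)) v :=
      hqd.hasFDerivAt.comp v (sigmaCLM n k).hasFDerivAt
    exact ((aCLM n k).hasFDerivAt).sub h1
  have hpT : HasFDerivAt (pTil k p i) (-(Dp.comp (sigmaCLM n k))) v := by
    have h1 : HasFDerivAt (fun w => p i (sigmaCLM n k w)) (Dp.comp (sigmaCLM n k)) v :=
      hpd.hasFDerivAt.comp v (sigmaCLM n k).hasFDerivAt
    exact h1.neg
  -- Φ on the two momentum/position directions
  have hΦP : phiCLM n g k ((0 : Fin n → ℂ), (0 : Fin g → ℂ), Pi.single i 1)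
      = -(((0 : Fin n → ℂ), (0 : Fin g → ℂ), Pi.single i 1) : PhSp n g) := by
    refine Prod.ext ?_ (Prod.ext ?_ ?_) <;> funext m <;>
      show _ = _ <;> simp [phiCLM]
  have hΦQ : phiCLM n g k ((0 : Fin n → ℂ), Pi.single i 1, (0 : Fin g → ℂ))
      = -(((0 : Fin n → ℂ), Pi.single i 1, (0 : Fin g → ℂ)) : PhSp n g) := by
    refine Prod.ext ?_ (Prod.ext ?_ ?_) <;> funext m <;>
      show _ = _ <;> simp [phiCLM]
  constructor
  · rw [hqT.fderiv, hHTf]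
    simp only [ContinuousLinearMap.sub_apply, ContinuousLinearMap.coe_comp',
      Function.comp_apply, ContinuousLinearMap.neg_apply]
    rw [hσe, hΦP, map_neg, map_sub, map_smul, hDq1]
    have hae : aCLM n k (Pi.single l 1) = c := rfl
    rw [hae, hq i l u hv]
    simp [hD]
    rfl
  · rw [hpT.fderiv, hHTf]
    simp only [ContinuousLinearMap.coe_comp', Function.comp_apply,
      ContinuousLinearMap.neg_apply]
    rw [hσe, hΦQ, map_neg, map_sub, map_smul, hDp1]
    rw [hp i l u hv]
    simp [hD]
    rfl
end
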